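/- Modular generalization of the CUT identity: let H = (V, E) be a finite graph with nonnegative edge weights w : E → ℝ≥0 and let m : V → ℝ. For u ∈ V set p(u) = (1/2)·Σ_{v : uv∈E} w(uv), and let K = Σ_{u∈V} max(p(u) − m(u), 0). Then for every W ⊆ V: Σ_{u∉W} max(p(u) − m(u), 0) + Σ_{u∈W} max(m(u) − p(u), 0) + (1/2)·Σ_{uv∈E, u∈W, v∉W} w(uv) = Σ_{u∈W} m(u) − w(W) + K, where w(W) is the total weight of the edges with both endpoints in W. -/

import Mathlib

open scoped Classical

noncomputable section

variable {V : Type*} [Fintype V] [DecidableEq V]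

/-- `p(u) = (1/2) Σ_{v : uv ∈ E} w(uv)` : half the total weight of the edges
incident to `u`. -/
def halfDeg (G : SimpleGraph V) [DecidableRel G.Adj] (w : Sym2 V → ℝ) (u : V) : ℝ :=
  (1 / 2) * ∑ v ∈ G.neighborFinset u, w s(u, v)

/-- `w(W)` : the total weight of the edges of the graph having both endpoints in `W`. -/
def inWeight (G : SimpleGraph V) [DecidableRel G.Adj] (w : Sym2 V → ℝ)
    (W : Finset V) : ℝ :=
  ∑ e ∈ G.edgeFinset.filter (fun e => ∀ v ∈ e, v ∈ W), w e

/-!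
Summing `p` over `W` counts every edge inside `W` twice and every edge leaving `W` once, so
`∑_{u ∈ W} p(u) = w(W) + (1/2) · cut(W)`. On `W` we write `max (m - p) 0 = max (p - m) 0 + (m - p)`;
the left-hand side then becomes `K + ∑_{u ∈ W} m(u) - ∑_{u ∈ W} p(u)`, which is the right-hand side.
-/

open Finset

namespace Sym2

variable {α : Type*}

theorem exists_eq_mk_mem_notMem_iff (W : Finset α) (i j : α) :
    (∃ a b, s(i, j) = s(a, b) ∧ a ∈ W ∧ b ∉ W) ↔ i ∈ W ∧ j ∉ W ∨ j ∈ W ∧ i ∉ W := by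
  constructor
  · rintro ⟨a, b, hab, ha, hb⟩
    rcases Sym2.eq_iff.1 hab with ⟨rfl, rfl⟩ | ⟨rfl, rfl⟩
    exacts [.inl ⟨ha, hb⟩, .inr ⟨ha, hb⟩]
  · rintro (⟨hi, hj⟩ | ⟨hj, hi⟩)
    exacts [⟨i, j, rfl, hi, hj⟩, ⟨j, i, eq_swap, hj, hi⟩]

theorem card_filter_mem_eq [DecidableEq α] (W : Finset α) {e : Sym2 α} (he : ¬e.IsDiag) :
    #{u ∈ W | u ∈ e} = (if ∀ v ∈ e, v ∈ W then 2 else 0) +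
      if ∃ i j, e = s(i, j) ∧ i ∈ W ∧ j ∉ W then 1 else 0 := by
  induction e with
  | _ i j =>
    have hij : i ≠ j := he
    have hfilter : {u ∈ W | u ∈ s(i, j)} = ({i, j} : Finset α).filter (· ∈ W) := by
      ext; simp [and_comm]
    rw [hfilter, exists_eq_mk_mem_notMem_iff]
    by_cases hi : i ∈ W <;> by_cases hj : j ∈ W <;>
      simp [filter_insert, filter_singleton, hi, hj, hij]

end Sym2

namespace SimpleGraph

variable {M : Type*} [AddCommMonoid M] (G : SimpleGraph V) [DecidableRel G.Adj]

theorem sum_neighborFinset_eq_sum_filter_edgeFinset (f : Sym2 V → M) (u : V) :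
    ∑ v ∈ G.neighborFinset u, f s(u, v) = ∑ e ∈ G.edgeFinset with u ∈ e, f e := by
  refine sum_bij (fun v _ => s(u, v)) ?_ (fun _ _ _ _ => Sym2.congr_right.mp) ?_
    (fun _ _ => rfl)
  · intro v hv; simpa using hv
  · intro e he
    rw [mem_filter, mem_edgeFinset] at he
    refine ⟨Sym2.Mem.other he.2, ?_, Sym2.other_spec he.2⟩
    rw [mem_neighborFinset, ← mem_edgeSet, Sym2.other_spec he.2]
    exact he.1

theorem sum_sum_neighborFinset_eq (f : Sym2 V → M) (W : Finset V) :
    ∑ u ∈ W, ∑ v ∈ G.neighborFinset u, f s(u, v) =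
      2 • ∑ e ∈ G.edgeFinset with ∀ v ∈ e, v ∈ W, f e +
        ∑ e ∈ G.edgeFinset with ∃ i j, e = s(i, j) ∧ i ∈ W ∧ j ∉ W, f e := by
  calc ∑ u ∈ W, ∑ v ∈ G.neighborFinset u, f s(u, v)
      = ∑ u ∈ W, ∑ e ∈ G.edgeFinset with u ∈ e, f e :=
        sum_congr rfl fun u _ => G.sum_neighborFinset_eq_sum_filter_edgeFinset f u
    _ = ∑ e ∈ G.edgeFinset, ∑ u ∈ W with u ∈ e, f e :=
        sum_comm' fun u e => by simp only [mem_filter]; tauto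
    _ = ∑ e ∈ G.edgeFinset, ((if ∀ v ∈ e, v ∈ W then 2 else 0) +
          if ∃ i j, e = s(i, j) ∧ i ∈ W ∧ j ∉ W then 1 else 0) • f e := by
        refine sum_congr rfl fun e he => ?_
        have he' := G.not_isDiag_of_mem_edgeSet (mem_edgeFinset.1 he)
        rw [sum_const, Sym2.card_filter_mem_eq W he']
        -- the two sides differ only in the `Decidable` instances of the `∃` condition
        congr
    _ = _ := by
        simp only [add_smul, ite_smul, zero_smul, one_smul, sum_add_distrib, sum_ite,
          sum_const_zero, add_zero, smul_sum]

end SimpleGraph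

theorem sum_halfDeg_eq_inWeight_add_half_cut (G : SimpleGraph V) [DecidableRel G.Adj]
    (w : Sym2 V → ℝ) (W : Finset V) :
    ∑ u ∈ W, halfDeg G w u = inWeight G w W +
      (1 / 2) * ∑ e ∈ G.edgeFinset with ∃ i j, e = s(i, j) ∧ i ∈ W ∧ j ∉ W, w e := by
  simp only [halfDeg, inWeight, ← mul_sum, G.sum_sum_neighborFinset_eq, nsmul_eq_mul]
  ring

theorem max_sub_zero_eq_max_sub_zero_add {α : Type*} [AddCommGroup α] [LinearOrder α]
    [IsOrderedAddMonoid α] (a b : α) : max (a - b) 0 = max (b - a) 0 + (a - b) := by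
  have h := max_zero_sub_max_neg_zero_eq_self (a - b)
  rw [neg_sub] at h
  exact sub_eq_iff_eq_add'.mp h

theorem cut_identity_modular_general (G : SimpleGraph V) [DecidableRel G.Adj]
    (w : Sym2 V → ℝ) (m : V → ℝ) (W : Finset V) :
    (∑ u ∈ Wᶜ, max (halfDeg G w u - m u) 0) +
      (∑ u ∈ W, max (m u - halfDeg G w u) 0) +
      (1 / 2) * ∑ e ∈ G.edgeFinset.filter
          (fun e => ∃ i j, e = s(i, j) ∧ i ∈ W ∧ j ∉ W), w e =
    (∑ u ∈ W, m u) - inWeight G w W + ∑ u : V, max (halfDeg G w u - m u) 0 := by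
  have hK := sum_add_sum_compl W fun u => max (halfDeg G w u - m u) 0
  have hW : ∑ u ∈ W, max (m u - halfDeg G w u) 0 =
      ∑ u ∈ W, max (halfDeg G w u - m u) 0 + (∑ u ∈ W, m u - ∑ u ∈ W, halfDeg G w u) := by
    rw [← sum_sub_distrib, ← sum_add_distrib]
    exact sum_congr rfl fun u _ => max_sub_zero_eq_max_sub_zero_add _ _
  rw [hW, sum_halfDeg_eq_inWeight_add_half_cut]
  linarith

/-- Modular generalization of the CUT identity: let `H = (V, E)` be a finite graph
with nonnegative edge weights `w`, let `m : V → ℝ`, set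
`p(u) = (1/2) Σ_{v : uv ∈ E} w(uv)` and `K = Σ_{u ∈ V} max (p(u) - m(u)) 0`. Then for
every `W ⊆ V`,
`Σ_{u ∉ W} max (p(u)-m(u)) 0 + Σ_{u ∈ W} max (m(u)-p(u)) 0
   + (1/2) Σ_{uv ∈ E, u ∈ W, v ∉ W} w(uv) = Σ_{u ∈ W} m(u) - w(W) + K`. -/
theorem cut_identity_modular (G : SimpleGraph V) [DecidableRel G.Adj]
    (w : Sym2 V → ℝ) (hw : ∀ e, 0 ≤ w e) (m : V → ℝ) (W : Finset V) :
    (∑ u ∈ Wᶜ, max (halfDeg G w u - m u) 0) +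
      (∑ u ∈ W, max (m u - halfDeg G w u) 0) +
      (1 / 2) * ∑ e ∈ G.edgeFinset.filter
          (fun e => ∃ i j, e = s(i, j) ∧ i ∈ W ∧ j ∉ W), w e =
    (∑ u ∈ W, m u) - inWeight G w W + ∑ u : V, max (halfDeg G w u - m u) 0 :=
  cut_identity_modular_general G w m W
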